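/- Let z₁, z₂ ∈ ℂ^n with Z = [z₁, z₂] satisfying Z*Z = I₂, and set X̃ = Re(Z), Ỹ = Im(Z) ∈ ℝ^{n×2} and G = [Ỹ, X̃] ∈ ℝ^{n×4}. Suppose φ_m, φ_M ≥ 0 and p₁, p₂, q₁, q₂ ∈ ℝ² are such that GᵀG·(p₁ᵀ, q₁ᵀ)ᵀ = φ_m²·(p₁ᵀ, q₁ᵀ)ᵀ, GᵀG·(p₂ᵀ, q₂ᵀ)ᵀ = φ_M²·(p₂ᵀ, q₂ᵀ)ᵀ, and the four vectors (p₁ᵀ, q₁ᵀ)ᵀ, (p₂ᵀ, q₂ᵀ)ᵀ, (−q₁ᵀ, p₁ᵀ)ᵀ, (−q₂ᵀ, p₂ᵀ)ᵀ form an orthonormal basis of ℝ⁴. Define φ₁ = 1 − 2φ_m², φ₂ = 1 − 2φ_M², and Ω = [[p₁, p₂, −q₁, −q₂], [q₁, q₂, p₁, p₂]] ∈ ℝ^{4×4} (the orthogonal matrix whose columns are the four vectors above). Then [[X̃ᵀX̃ − ỸᵀỸ, −(X̃ᵀỸ + ỸᵀX̃)], [−(X̃ᵀỸ + ỸᵀX̃),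 ỸᵀỸ − X̃ᵀX̃]] = Ω · diag(φ₁, φ₂, −φ₁, −φ₂) · Ωᵀ, and [[X̃ᵀỸ + ỸᵀX̃, X̃ᵀX̃ − ỸᵀỸ], [X̃ᵀX̃ − ỸᵀỸ, −(X̃ᵀỸ + ỸᵀX̃)]] = Ω · [[0, Φ], [Φ, 0]] · Ωᵀ, where Φ = diag(φ₁, φ₂). -/

import Mathlib

/-!
Since `Z` is an isometry, `X̃ᵀX̃ + ỸᵀỸ = 1` and `X̃ᵀỸ = ỸᵀX̃`, so the first matrix is
`M = 1 - 2 GᵀG` and the second is `J M` with `J = [[0, -1], [1, 0]]`. Thus `M` has eigenvalue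
`1 - 2c` on each eigenvector `v` of `GᵀG` with eigenvalue `c` and, as `M` anticommutes with `J`,
eigenvalue `-(1 - 2c)` on `J v`. As `Ω = [V, J V]` with `V = [(p₁, q₁), (p₂, q₂)]`, this gives
`M Ω = Ω diag(Φ, -Φ)`; the second identity follows because `J` commutes with `Ω` and
`J diag(Φ, -Φ) = [[0, Φ], [Φ, 0]]`.
-/

open Matrix

namespace Matrix

section Complex

variable {m n : Type*} [Fintype m]

theorem map_re_conjTranspose_mul (Z W : Matrix m n ℂ) :
    (Zᴴ * W).map Complex.re = (Z.map Complex.re)ᵀ * W.map Complex.re +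
      (Z.map Complex.im)ᵀ * W.map Complex.im := by
  ext i j
  simp [mul_apply, Complex.re_sum, Finset.sum_add_distrib]

theorem map_im_conjTranspose_mul (Z W : Matrix m n ℂ) :
    (Zᴴ * W).map Complex.im = (Z.map Complex.re)ᵀ * W.map Complex.im -
      (Z.map Complex.im)ᵀ * W.map Complex.re := by
  ext i j
  simp [mul_apply, Complex.im_sum, sub_eq_add_neg, Finset.sum_add_distrib]

theorem map_re_im_of_conjTranspose_mul_self_eq_one [DecidableEq n] {Z : Matrix m n ℂ}
    (hZ : Zᴴ * Z = 1) :
    (Z.map Complex.re)ᵀ * Z.map Complex.re + (Z.map Complex.im)ᵀ * Z.map Complex.im = 1 ∧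
      (Z.map Complex.re)ᵀ * Z.map Complex.im = (Z.map Complex.im)ᵀ * Z.map Complex.re := by
  refine ⟨?_, sub_eq_zero.mp ?_⟩
  · rw [← map_re_conjTranspose_mul, hZ]
    simp
  · rw [← map_im_conjTranspose_mul, hZ]
    ext i j
    simp [one_apply, apply_ite]

end Complex

variable {R : Type*} [CommRing R]

theorem fromBlocks_eq_one_sub_two_smul_gram {m n : Type*} [Fintype m] [DecidableEq n]
    (X Y : Matrix m n R) (hunit : Xᵀ * X + Yᵀ * Y = 1) (hsymm : Xᵀ * Y = Yᵀ * X) :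
    fromBlocks (Xᵀ * X - Yᵀ * Y) (-(Xᵀ * Y + Yᵀ * X)) (-(Xᵀ * Y + Yᵀ * X))
        (-(Xᵀ * X - Yᵀ * Y)) =
      1 - (2 : R) • ((fromCols Y X)ᵀ * fromCols Y X) := by
  rw [transpose_fromCols, fromRows_mul_fromCols, ← fromBlocks_one, fromBlocks_smul,
    sub_eq_add_neg (fromBlocks _ _ _ _), fromBlocks_neg, fromBlocks_add, fromBlocks_inj, ← hunit,
    ← hsymm]
  refine ⟨?_, ?_, ?_, ?_⟩ <;> module

theorem mul_eq_mul_diagonal_of_mulVec_col {n l : Type*} [Fintype n] [Fintype l] [DecidableEq l]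
    {A : Matrix n n R} {V : Matrix n l R} (d : l → R)
    (h : ∀ k, A *ᵥ (fun i => V i k) = d k • fun i => V i k) :
    A * V = V * diagonal d := by
  ext i k
  rw [mul_diagonal, mul_comm]
  simpa [mul_apply, mulVec, dotProduct] using congrFun (h k) i

theorem eq_mul_mul_transpose_of_mul_eq {n : Type*} [Fintype n] [DecidableEq n]
    {M Ω D : Matrix n n R} (hΩ : Ωᵀ * Ω = 1) (h : M * Ω = Ω * D) : M = Ω * D * Ωᵀ := by
  rw [← h, Matrix.mul_assoc, mul_eq_one_comm.mp hΩ, Matrix.mul_one]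

section J

variable {l : Type*} [Fintype l] [DecidableEq l]

theorem J_mul_fromBlocks (A B : Matrix l l R) :
    J l R * fromBlocks A (-B) (-B) (-A) = fromBlocks B A A (-B) := by
  simp [J, fromBlocks_multiply]

theorem fromBlocks_mul_J (A B : Matrix l l R) :
    fromBlocks A (-B) (-B) (-A) * J l R = -(J l R * fromBlocks A (-B) (-B) (-A)) := by
  simp [J, fromBlocks_multiply, fromBlocks_neg]

theorem J_mul_fromBlocks_diag (D : Matrix l l R) :
    J l R * fromBlocks D 0 0 (-D) = fromBlocks 0 D D 0 := by
  simp [J, fromBlocks_multiply]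

theorem fromBlocks_eq_fromCols_J_mul (P Q : Matrix l l R) :
    fromBlocks P (-Q) Q P = fromCols (fromRows P Q) (J l R * fromRows P Q) := by
  rw [J, fromBlocks_mul_fromRows, fromCols_fromRows_eq_fromBlocks]
  simp

theorem J_commute_fromBlocks (P Q : Matrix l l R) :
    Commute (J l R) (fromBlocks P (-Q) Q P) := by
  simp [Commute, SemiconjBy, J, fromBlocks_multiply]

theorem mul_fromCols_J_mul {M : Matrix (l ⊕ l) (l ⊕ l) R} {V : Matrix (l ⊕ l) l R}
    {D : Matrix l l R} (hMJ : M * J l R = -(J l R * M)) (hMV : M * V = V * D) :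
    M * fromCols V (J l R * V) = fromCols V (J l R * V) * fromBlocks D 0 0 (-D) := by
  rw [mul_fromCols, fromCols_mul_fromBlocks, ← Matrix.mul_assoc, hMJ, Matrix.neg_mul,
    Matrix.mul_assoc, hMV]
  simp [Matrix.mul_assoc]

end J

end Matrix

theorem stmt5_general {n : ℕ} (Z : Matrix (Fin n) (Fin 2) ℂ) (hZ : Zᴴ * Z = 1)
    (X Y : Matrix (Fin n) (Fin 2) ℝ)
    (hX : X = Z.map Complex.re) (hY : Y = Z.map Complex.im)
    (G : Matrix (Fin n) (Fin 2 ⊕ Fin 2) ℝ) (hG : G = Matrix.fromCols Y X)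
    (φm φM : ℝ)
    (p₁ p₂ q₁ q₂ : Fin 2 → ℝ)
    (heig₁ : (Gᵀ * G).mulVec (Sum.elim p₁ q₁) = (φm ^ 2) • Sum.elim p₁ q₁)
    (heig₂ : (Gᵀ * G).mulVec (Sum.elim p₂ q₂) = (φM ^ 2) • Sum.elim p₂ q₂)
    (P Q : Matrix (Fin 2) (Fin 2) ℝ)
    (hP : P = Matrix.of fun i k => if k = (0 : Fin 2) then p₁ i else p₂ i)
    (hQ : Q = Matrix.of fun i k => if k = (0 : Fin 2) then q₁ i else q₂ i)
    (Ω : Matrix (Fin 2 ⊕ Fin 2) (Fin 2 ⊕ Fin 2) ℝ)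
    (hΩ : Ω = Matrix.fromBlocks P (-Q) Q P)
    (hortho : Ωᵀ * Ω = 1)
    (Φ : Matrix (Fin 2) (Fin 2) ℝ)
    (hΦ : Φ = Matrix.diagonal ![1 - 2 * φm ^ 2, 1 - 2 * φM ^ 2]) :
    Matrix.fromBlocks (Xᵀ * X - Yᵀ * Y) (-(Xᵀ * Y + Yᵀ * X))
        (-(Xᵀ * Y + Yᵀ * X)) (Yᵀ * Y - Xᵀ * X) =
      Ω * Matrix.fromBlocks Φ 0 0 (-Φ) * Ωᵀ ∧
    Matrix.fromBlocks (Xᵀ * Y + Yᵀ * X) (Xᵀ * X - Yᵀ * Y)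
        (Xᵀ * X - Yᵀ * Y) (-(Xᵀ * Y + Yᵀ * X)) =
      Ω * Matrix.fromBlocks 0 Φ Φ 0 * Ωᵀ := by
  obtain ⟨hunit, hsymm⟩ := hX ▸ hY ▸ map_re_im_of_conjTranspose_mul_self_eq_one hZ
  have hV : Gᵀ * G * fromRows P Q = fromRows P Q * diagonal ![φm ^ 2, φM ^ 2] := by
    refine mul_eq_mul_diagonal_of_mulVec_col _ fun k => ?_
    have hcol : (fun i => fromRows P Q i k) = Sum.elim (fun i => P i k) (fun i => Q i k) := by
      ext (i | i) <;> rfl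
    rw [hcol]
    fin_cases k
    · simpa [hP, hQ] using heig₁
    · simpa [hP, hQ] using heig₂
  have hΦ_sub : Φ = 1 - (2 : ℝ) • diagonal ![φm ^ 2, φM ^ 2] := by
    rw [hΦ]
    ext i j
    fin_cases i <;> fin_cases j <;> simp
  rw [← neg_sub (Xᵀ * X), ← J_mul_fromBlocks (Xᵀ * X - Yᵀ * Y)]
  have hMΩ : fromBlocks (Xᵀ * X - Yᵀ * Y) (-(Xᵀ * Y + Yᵀ * X)) (-(Xᵀ * Y + Yᵀ * X))
      (-(Xᵀ * X - Yᵀ * Y)) * Ω = Ω * fromBlocks Φ 0 0 (-Φ) := by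
    rw [hΩ, fromBlocks_eq_fromCols_J_mul]
    refine mul_fromCols_J_mul (fromBlocks_mul_J _ _) ?_
    rw [fromBlocks_eq_one_sub_two_smul_gram X Y hunit hsymm, ← hG, Matrix.sub_mul,
      Matrix.smul_mul, hV, hΦ_sub, Matrix.mul_sub, Matrix.mul_smul, Matrix.one_mul, Matrix.mul_one]
  have hdecomp := eq_mul_mul_transpose_of_mul_eq hortho hMΩ
  refine ⟨hdecomp, ?_⟩
  rw [hdecomp, ← J_mul_fromBlocks_diag, ← Matrix.mul_assoc, ← Matrix.mul_assoc, hΩ,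
    (J_commute_fromBlocks P Q).eq, Matrix.mul_assoc (fromBlocks P (-Q) Q P)]

/-- Spectral decompositions of the two symmetric Hamiltonian matrices built from
`X̃ = Re(Z)`, `Ỹ = Im(Z)` (with `Z*Z = I₂`), in terms of the singular value data of
`G = [Ỹ, X̃]`: with `φ₁ = 1 − 2φ_m²`, `φ₂ = 1 − 2φ_M²`, `Φ = diag(φ₁, φ₂)` and the
orthogonal matrix `Ω = [[p₁, p₂, −q₁, −q₂], [q₁, q₂, p₁, p₂]]`, one has
`[[X̃ᵀX̃ − ỸᵀỸ, −(X̃ᵀỸ + ỸᵀX̃)], [−(X̃ᵀỸ + ỸᵀX̃), ỸᵀỸ − X̃ᵀX̃]] = Ω diag(φ₁, φ₂, −φ₁, −φ₂) Ωᵀ`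
and
`[[X̃ᵀỸ + ỸᵀX̃, X̃ᵀX̃ − ỸᵀỸ], [X̃ᵀX̃ − ỸᵀỸ, −(X̃ᵀỸ + ỸᵀX̃)]] = Ω [[0, Φ], [Φ, 0]] Ωᵀ`. -/
theorem stmt5 {n : ℕ} (Z : Matrix (Fin n) (Fin 2) ℂ) (hZ : Zᴴ * Z = 1)
    (X Y : Matrix (Fin n) (Fin 2) ℝ)
    (hX : X = Z.map Complex.re) (hY : Y = Z.map Complex.im)
    (G : Matrix (Fin n) (Fin 2 ⊕ Fin 2) ℝ) (hG : G = Matrix.fromCols Y X)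
    (φm φM : ℝ) (hφm : 0 ≤ φm) (hφM : 0 ≤ φM)
    (p₁ p₂ q₁ q₂ : Fin 2 → ℝ)
    (heig₁ : (Gᵀ * G).mulVec (Sum.elim p₁ q₁) = (φm ^ 2) • Sum.elim p₁ q₁)
    (heig₂ : (Gᵀ * G).mulVec (Sum.elim p₂ q₂) = (φM ^ 2) • Sum.elim p₂ q₂)
    (P Q : Matrix (Fin 2) (Fin 2) ℝ)
    (hP : P = Matrix.of fun i k => if k = (0 : Fin 2) then p₁ i else p₂ i)
    (hQ : Q = Matrix.of fun i k => if k = (0 : Fin 2) then q₁ i else q₂ i)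
    (Ω : Matrix (Fin 2 ⊕ Fin 2) (Fin 2 ⊕ Fin 2) ℝ)
    (hΩ : Ω = Matrix.fromBlocks P (-Q) Q P)
    (hortho : Ωᵀ * Ω = 1)
    (Φ : Matrix (Fin 2) (Fin 2) ℝ)
    (hΦ : Φ = Matrix.diagonal ![1 - 2 * φm ^ 2, 1 - 2 * φM ^ 2]) :
    Matrix.fromBlocks (Xᵀ * X - Yᵀ * Y) (-(Xᵀ * Y + Yᵀ * X))
        (-(Xᵀ * Y + Yᵀ * X)) (Yᵀ * Y - Xᵀ * X) =
      Ω * Matrix.fromBlocks Φ 0 0 (-Φ) * Ωᵀ ∧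
    Matrix.fromBlocks (Xᵀ * Y + Yᵀ * X) (Xᵀ * X - Yᵀ * Y)
        (Xᵀ * X - Yᵀ * Y) (-(Xᵀ * Y + Yᵀ * X)) =
      Ω * Matrix.fromBlocks 0 Φ Φ 0 * Ωᵀ :=
  stmt5_general Z hZ X Y hX hY G hG φm φM p₁ p₂ q₁ q₂ heig₁ heig₂ P Q hP hQ Ω hΩ hortho Φ hΦ
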